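/- Let D be a maximal Arrow's single-peaked domain on a set A of size m ≥ 4. If P = (s,a₁,a₂,…,a_{m−2},f) is an extremal order of D, then the order P' = (a₂,a₁,a₃,…,a_{m−2},f,s) also belongs to D. -/

import Mathlib

/-- A list `l` represents a linear order on the finite set `A`:
it is duplicate-free and its members are exactly the elements of `A`,
listed from most to least preferred. -/
def IsLinOrd {α : Type*} (A : Finset α) (l : List α) : Prop :=
  l.Nodup ∧ ∀ a : α, a ∈ l ↔ a ∈ A

/-- The restriction of the order `l` to the subset `S`. -/
def restrictList {α : Type*} [DecidableEq α] (l : List α) (S : Finset α) : List α :=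
  l.filter (fun a => a ∈ S)

/-- The domain contraction of `D` on `S`: the set of restrictions to `S`
of the orders in `D` (as a set, so duplicates are automatically removed). -/
def contraction {α : Type*} [DecidableEq α] (D : Set (List α)) (S : Finset α) :
    Set (List α) :=
  (fun l => restrictList l S) '' D

/-- `D` contains a Condorcet triple: elements `a, b, c` and orders
`v₁, v₂, v₃ ∈ D` restricting on `{a,b,c}` to `a≻b≻c`, `b≻c≻a`, `c≻a≻b`. -/
def CondorcetTriple {α : Type*} [DecidableEq α] (D : Set (List α)) : Prop :=
  ∃ a b c : α, a ≠ b ∧ a ≠ c ∧ b ≠ c ∧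
    ∃ v₁ ∈ D, ∃ v₂ ∈ D, ∃ v₃ ∈ D,
      restrictList v₁ {a, b, c} = [a, b, c] ∧
      restrictList v₂ {a, b, c} = [b, c, a] ∧
      restrictList v₃ {a, b, c} = [c, a, b]

/-- A Condorcet domain on `A`: a set of linear orders on `A` with no Condorcet triple. -/
def IsCondorcetDomain {α : Type*} [DecidableEq α] (A : Finset α) (D : Set (List α)) : Prop :=
  (∀ l ∈ D, IsLinOrd A l) ∧ ¬ CondorcetTriple D

/-- A maximal Condorcet domain on `A`: no strict superset is a Condorcet domain on `A`. -/
def IsMaxCondorcetDomain {α : Type*} [DecidableEq α] (A : Finset α) (D : Set (List α)) : Prop :=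
  IsCondorcetDomain A D ∧ ∀ D' : Set (List α), IsCondorcetDomain A D' → D ⊆ D' → D' = D

/-- `x` is a never-bottom element of the triple `T` for `D`:
no order of `D` ranks `x` below both other elements of `T`. -/
def NeverBottom {α : Type*} [DecidableEq α] (D : Set (List α)) (T : Finset α) (x : α) : Prop :=
  x ∈ T ∧ ∀ l ∈ D, (restrictList l T).getLast? ≠ some x

/-- An Arrow's single-peaked domain on `A`: a Condorcet domain such that every
3-element subset of `A` has a never-bottom element. -/
def IsArrowSP {α : Type*} [DecidableEq α] (A : Finset α) (D : Set (List α)) : Prop :=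
  IsCondorcetDomain A D ∧
    ∀ T : Finset α, T ⊆ A → T.card = 3 → ∃ x : α, NeverBottom D T x

/-- A maximal Arrow's single-peaked domain on `A`. -/
def IsMaxArrowSP {α : Type*} [DecidableEq α] (A : Finset α) (D : Set (List α)) : Prop :=
  IsMaxCondorcetDomain A D ∧ IsArrowSP A D

/-- `a` is a terminal element of `D`: some order of `D` ends with (least element) `a`. -/
def TerminalElt {α : Type*} (D : Set (List α)) (a : α) : Prop :=
  ∃ l ∈ D, l.getLast? = some a

/-- `l` is an extremal order of `D`: `l ∈ D`, and the first and last elements of `l`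
are the two terminal elements of `D`. -/
def IsExtremal {α : Type*} (D : Set (List α)) (l : List α) : Prop :=
  l ∈ D ∧ ∃ s t : α, s ≠ t ∧ l.head? = some s ∧ l.getLast? = some t ∧
    TerminalElt D s ∧ TerminalElt D t ∧ ∀ a : α, TerminalElt D a → a = s ∨ a = t

/-- The position of `a` in the order `l`, the first element being in position 1. -/
def posIn {α : Type*} [DecidableEq α] (l : List α) (a : α) : ℕ :=
  l.idxOf a + 1

/-! Adding `P'` to `D` keeps every never-bottom element of `D` never-bottom. A triple containing
`s` has `s` at the bottom in `P'`, and `s`, being terminal, is not never-bottom; a triple avoiding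
`s` meets the common tail `a₃ … f` of `P` and `P'`, so its least element is the same in both. A domain in which every triple has a never-bottom
element has no Condorcet triple, so `D ∪ {P'}` is a Condorcet domain and maximality gives
`P' ∈ D`. -/

lemma IsLinOrd.perm {α : Type*} {A : Finset α} {l l' : List α} (hl : IsLinOrd A l)
    (h : l'.Perm l) : IsLinOrd A l' :=
  ⟨h.nodup_iff.mpr hl.1, fun a => h.mem_iff.trans (hl.2 a)⟩

section

variable {α : Type*} [DecidableEq α]

lemma getLast?_restrictList_of_getLast? {l : List α} {S : Finset α} {a : α}
    (hl : l.getLast? = some a) (ha : a ∈ S) : (restrictList l S).getLast? = some a := by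
  obtain ⟨l', rfl⟩ := List.getLast?_eq_some_iff.mp hl
  simp [restrictList, ha]

lemma getLast?_restrictList_append {u M : List α} {S : Finset α} (h : ∃ t ∈ M, t ∈ S) :
    (restrictList (u ++ M) S).getLast? = (restrictList M S).getLast? := by
  obtain ⟨t, htM, htS⟩ := h
  rw [restrictList, List.filter_append]
  refine List.getLast?_append_of_ne_nil _ (List.ne_nil_of_mem (a := t) ?_)
  simpa using ⟨htM, htS⟩

lemma NeverBottom.ne_of_terminalElt {D : Set (List α)} {T : Finset α} {x a : α}
    (hx : NeverBottom D T x) (ha : TerminalElt D a) (haT : a ∈ T) : x ≠ a := by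
  rintro rfl
  obtain ⟨l, hlD, hl⟩ := ha
  exact hx.2 l hlD (getLast?_restrictList_of_getLast? hl haT)

lemma not_condorcetTriple_of_neverBottom {A : Finset α} {D : Set (List α)}
    (hlin : ∀ l ∈ D, IsLinOrd A l)
    (hnb : ∀ T ⊆ A, T.card = 3 → ∃ x, NeverBottom D T x) : ¬ CondorcetTriple D := by
  rintro ⟨a, b, c, hab, hac, hbc, v₁, hv₁, v₂, hv₂, v₃, hv₃, h₁, h₂, h₃⟩
  have hTA : {a, b, c} ⊆ A := by
    intro y hy
    have hy₁ : y ∈ restrictList v₁ {a, b, c} := by rw [h₁]; simpa using hy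
    exact ((hlin v₁ hv₁).2 y).mp (List.mem_filter.mp hy₁).1
  obtain ⟨x, hxT, hx⟩ := hnb _ hTA (Finset.card_eq_three.mpr ⟨a, b, c, hab, hac, hbc, rfl⟩)
  simp only [Finset.mem_insert, Finset.mem_singleton] at hxT
  rcases hxT with rfl | rfl | rfl
  · exact hx v₂ hv₂ (by rw [h₂]; rfl)
  · exact hx v₃ hv₃ (by rw [h₃]; rfl)
  · exact hx v₁ hv₁ (by rw [h₁]; rfl)

lemma IsMaxArrowSP.mem_of_forall_neverBottom {A : Finset α} {D : Set (List α)} {l : List α}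
    (hD : IsMaxArrowSP A D) (hl : IsLinOrd A l)
    (h : ∀ T ⊆ A, T.card = 3 → ∀ x, NeverBottom D T x → (restrictList l T).getLast? ≠ some x) :
    l ∈ D := by
  have hlin : ∀ l' ∈ insert l D, IsLinOrd A l' := by
    rintro l' (rfl | hl')
    exacts [hl, hD.1.1.1 l' hl']
  have hnb : ∀ T ⊆ A, T.card = 3 → ∃ x, NeverBottom (insert l D) T x := by
    intro T hTA hT
    obtain ⟨x, hx⟩ := hD.2.2 T hTA hT
    refine ⟨x, hx.1, ?_⟩
    rintro l' (rfl | hl')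
    exacts [h T hTA hT x hx, hx.2 l' hl']
  rw [← hD.1.2 _ ⟨hlin, not_condorcetTriple_of_neverBottom hlin hnb⟩ (Set.subset_insert l D)]
  exact Set.mem_insert l D

lemma getLast?_restrictList_swap_ne {A : Finset α} {D : Set (List α)} {s a₁ a₂ x : α}
    {M : List α} {T : Finset α} (hP : IsLinOrd A (s :: a₁ :: a₂ :: M))
    (hPD : s :: a₁ :: a₂ :: M ∈ D) (hs : TerminalElt D s) (hTA : T ⊆ A) (hT : T.card = 3)
    (hx : NeverBottom D T x) :
    (restrictList (a₂ :: a₁ :: (M ++ [s])) T).getLast? ≠ some x := by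
  by_cases hsT : s ∈ T
  · have hlast : (a₂ :: a₁ :: (M ++ [s])).getLast? = some s := by
      rw [← List.cons_append, ← List.cons_append, List.getLast?_concat]
    rw [getLast?_restrictList_of_getLast? hlast hsT]
    simpa using (hx.ne_of_terminalElt hs hsT).symm
  obtain ⟨t, htM, htT⟩ : ∃ t ∈ M, t ∈ T := by
    have hTpair : ¬ T ⊆ {a₁, a₂} := fun hsub => by
      have := (Finset.card_le_card hsub).trans Finset.card_le_two
      omega
    obtain ⟨t, htT, ht⟩ := Finset.not_subset.mp hTpair
    have htP := (hP.2 t).mpr (hTA htT)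
    simp only [Finset.mem_insert, Finset.mem_singleton, not_or] at ht
    simp only [List.mem_cons] at htP
    rcases htP with rfl | rfl | rfl | htM
    exacts [(hsT htT).elim, (ht.1 rfl).elim, (ht.2 rfl).elim, ⟨t, htM, htT⟩]
  have hsuffix : restrictList (M ++ [s]) T = restrictList M T := by simp [restrictList, hsT]
  rw [show a₂ :: a₁ :: (M ++ [s]) = [a₂, a₁] ++ (M ++ [s]) from rfl,
    getLast?_restrictList_append ⟨t, List.mem_append_left _ htM, htT⟩, hsuffix,
    ← getLast?_restrictList_append (u := [s, a₁, a₂]) ⟨t, htM, htT⟩]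
  exact hx.2 (s :: a₁ :: a₂ :: M) hPD

end

theorem stmt_9_general {α : Type*} [DecidableEq α] (A : Finset α)
    (D : Set (List α)) (hD : IsMaxArrowSP A D) (s f a₁ a₂ : α) (L : List α)
    (hP : IsExtremal D (s :: a₁ :: a₂ :: (L ++ [f]))) :
    a₂ :: a₁ :: (L ++ [f, s]) ∈ D := by
  obtain ⟨hPD, s', -, -, hhead, -, hs, -⟩ := hP
  obtain rfl : s = s' := by simpa using hhead
  have hlin := hD.1.1.1 _ hPD
  have hperm : (a₂ :: a₁ :: (L ++ [f, s])).Perm (s :: a₁ :: a₂ :: (L ++ [f])) := by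
    simpa using (List.perm_append_singleton s (a₂ :: a₁ :: (L ++ [f]))).trans
      ((List.Perm.swap a₁ a₂ (L ++ [f])).cons s)
  refine hD.mem_of_forall_neverBottom (hlin.perm hperm) fun T hTA hT x hx => ?_
  simpa using getLast?_restrictList_swap_ne hlin hPD hs hTA hT hx

/-- If `P = (s, a₁, a₂, a₃, …, a_{m-2}, f)` is an extremal order of a maximal Arrow's
single-peaked domain `D` on a set of size `m ≥ 4`, then
`P' = (a₂, a₁, a₃, …, a_{m-2}, f, s)` also belongs to `D`. -/
theorem stmt_9 {α : Type*} [DecidableEq α] (A : Finset α) (hm : 4 ≤ A.card)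
    (D : Set (List α)) (hD : IsMaxArrowSP A D) (s f a₁ a₂ : α) (L : List α)
    (hP : IsExtremal D (s :: a₁ :: a₂ :: (L ++ [f]))) :
    a₂ :: a₁ :: (L ++ [f, s]) ∈ D :=
  stmt_9_general A D hD s f a₁ a₂ L hP
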